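/- Let H be a real vector space with a symmetric bilinear form B, and suppose β ∈ H satisfies B(β,β) > 0. Suppose a symmetric 2n-multilinear form T satisfies c·T(γ,…,γ) = B(γ,γ)^n for all γ, with c > 0. If α ∈ H satisfies T(β^{2n−1}, α) > 0 then B(α,β) > 0. -/

import Mathlib

/-!
Differentiate the identity `c · T(β + tα, …, β + tα) = B(β + tα, β + tα)^n` at `t = 0`.
By multilinearity and symmetry the left side has derivative `2n · c · T(β^{2n−1}, α)`, the right
side `n · B(β, β)^{n−1} · 2 B(α, β)`. As `B(β, β) > 0`, `B(α, β)` has the sign of `T(β^{2n−1}, α)`.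
-/

open Function Finset

theorem MultilinearMap.apply_const_add_smul_eq_sum {R ι M N : Type*} [CommSemiring R]
    [AddCommMonoid M] [Module R M] [AddCommMonoid N] [Module R N] [Fintype ι] [DecidableEq ι]
    (T : MultilinearMap R (fun _ : ι => M) N) (α β : M) (t : R) :
    T (fun _ => β + t • α) =
      ∑ s : Finset ι, t ^ #s • T (s.piecewise (fun _ => α) (fun _ => β)) := by
  have hsplit : (fun _ : ι => β + t • α) = (fun _ => t • α) + fun _ => β := by
    funext; exact add_comm _ _
  rw [hsplit, T.map_add_univ]
  refine sum_congr rfl fun s _ => ?_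
  have hsmul : s.piecewise (fun _ => t • α) (fun _ => β) =
      s.piecewise (fun i => t • s.piecewise (fun _ => α) (fun _ => β) i)
        (s.piecewise (fun _ => α) (fun _ => β)) :=
    s.piecewise_congr (fun i hi => by rw [s.piecewise_eq_of_mem _ _ hi])
      (fun i hi => by rw [s.piecewise_eq_of_notMem _ _ hi])
  rw [hsmul, T.map_piecewise_smul, prod_const]

theorem MultilinearMap.hasDerivAt_apply_const_add_smul {ι M : Type*} [AddCommGroup M]
    [Module ℝ M] [Fintype ι] [DecidableEq ι] (T : MultilinearMap ℝ (fun _ : ι => M) ℝ)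
    (α β : M) :
    HasDerivAt (fun t : ℝ => T (fun _ => β + t • α)) (∑ i, T (update (fun _ => β) i α)) 0 := by
  have hcoeff : ∀ k : ℕ, (k : ℝ) * 0 ^ (k - 1) = if k = 1 then 1 else 0 := by
    rintro (_ | _ | k) <;> simp
  have hsum : ∑ s : Finset ι, ((#s : ℝ) * 0 ^ (#s - 1)) *
      T (s.piecewise (fun _ => α) (fun _ => β)) = ∑ i, T (update (fun _ => β) i α) := by
    simp_rw [hcoeff, ite_mul, one_mul, zero_mul]
    rw [← sum_filter, ← powerset_univ, ← powersetCard_eq_filter, powersetCard_one, sum_map]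
    simp only [Embedding.coeFn_mk, piecewise_singleton]
  simp_rw [T.apply_const_add_smul_eq_sum, smul_eq_mul]
  rw [← hsum]
  exact HasDerivAt.fun_sum fun s _ => (hasDerivAt_pow #s 0).mul_const _

theorem update_const_eq_of_perm_invariant {ι M N : Type*} [DecidableEq ι] (f : (ι → M) → N)
    (hf : ∀ (v : ι → M) (e : Equiv.Perm ι), f (v ∘ e) = f v) (α β : M) (i j : ι) :
    f (update (fun _ => β) i α) = f (update (fun _ => β) j α) := by
  rw [← hf _ (Equiv.swap i j), update_comp_equiv, Equiv.symm_swap, Equiv.swap_apply_left]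
  rfl

theorem LinearMap.BilinForm.hasDerivAt_apply_add_smul_self {H : Type*} [AddCommGroup H]
    [Module ℝ H] (B : LinearMap.BilinForm ℝ H) (α β : H) :
    HasDerivAt (fun t : ℝ => B (β + t • α) (β + t • α)) (B α β + B β α) 0 := by
  have hexp : ∀ t : ℝ,
      B (β + t • α) (β + t • α) = B β β + (B α β + B β α) * t + B α α * t ^ 2 := by
    intro t
    simp only [map_add, map_smul, LinearMap.add_apply, LinearMap.smul_apply, smul_eq_mul]
    ring
  simp_rw [hexp]
  simpa using (((hasDerivAt_id (0 : ℝ)).const_mul (B α β + B β α)).const_add (B β β)).fun_add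
    ((hasDerivAt_pow 2 (0 : ℝ)).const_mul (B α α))

/-- abstract Corollary `cornull`: if `c·T(γ,…,γ) = B(γ,γ)^n` with `c > 0`,
`B` symmetric bilinear, `B(β,β) > 0` and `T(β^{2n−1}, α) > 0`, then `B(α,β) > 0`. -/
theorem positive_pairing_of_positive_intersection
    {H : Type*} [AddCommGroup H] [Module ℝ H] (n : ℕ) (hn : 1 ≤ n)
    (T : MultilinearMap ℝ (fun _ : Fin (2 * n) => H) ℝ)
    (hsym : ∀ (v : Fin (2 * n) → H) (e : Equiv.Perm (Fin (2 * n))), T (v ∘ e) = T v)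
    (B : LinearMap.BilinForm ℝ H) (hBsymm : ∀ x y, B x y = B y x)
    (c : ℝ) (hc : 0 < c)
    (hfujiki : ∀ γ : H, c * T (fun _ => γ) = B γ γ ^ n)
    (α β : H) (hβ : 0 < B β β)
    (hT : 0 < T (fun i => if (i : ℕ) < 1 then α else β)) :
    0 < B α β := by
  set i₀ : Fin (2 * n) := ⟨0, by omega⟩
  have hT₀ : (fun i : Fin (2 * n) => if (i : ℕ) < 1 then α else β) =
      update (fun _ => β) i₀ α := by
    funext i
    simp [update_apply, i₀, Fin.ext_iff]
  have hsum : ∑ i, T (update (fun _ => β) i α) = 2 * n * T (update (fun _ => β) i₀ α) := by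
    simp_rw [update_const_eq_of_perm_invariant T hsym α β _ i₀, sum_const, card_univ,
      Fintype.card_fin, nsmul_eq_mul, Nat.cast_mul, Nat.cast_ofNat]
  have hderiv : HasDerivAt (fun t : ℝ => B (β + t • α) (β + t • α) ^ n)
      (c * (2 * n * T (update (fun _ => β) i₀ α))) 0 := by
    simp_rw [← hfujiki, ← hsum]
    exact (T.hasDerivAt_apply_const_add_smul α β).const_mul c
  have hkey := hderiv.unique ((B.hasDerivAt_apply_add_smul_self α β).pow n)
  rw [← hT₀, hBsymm β α] at hkey
  simp only [zero_smul, add_zero] at hkey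
  have hfactor : 0 < (n : ℝ) * B β β ^ (n - 1) * 2 := by positivity
  have hlhs : 0 < c * (2 * n * T (fun i => if (i : ℕ) < 1 then α else β)) := by positivity
  nlinarith
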